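/- Let {s_a, p_A} be a representation of a weakly left-resolving labelled space (E,π,𝒞) in a C*-algebra B, and let Y = {s_{α_i} p_{A_i} s_{β_i}* : i = 1, …, N} be a finite set with α_i, β_i ∈ ℒ(E,π) of equal length |α_i| = |β_i|, A_i ∈ 𝒞, and A_i ⊆ r(α_i) ∩ r(β_i). Then the C*-subalgebra of B generated by Y is finite dimensional. -/

import Mathlib

/-- A labelled graph: a directed graph with vertex type `V`, edge type `E`,
source and range maps, together with a labelling of the edges by the alphabet `A`. -/
structure LabelledGraph (V : Type*) (E : Type*) (A : Type*) where
  src : E → V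
  rng : E → V
  lbl : E → A

namespace LabelledGraph

variable {V E A : Type*}

/-- A path is a nonempty list of edges such that the range of each edge is the
source of the next one. -/
def IsPath (G : LabelledGraph V E A) (l : List E) : Prop :=
  l ≠ [] ∧ l.Chain' (fun e f => G.rng e = G.src f)

/-- The language `ℒ(E,π)`: all (nonempty) words over `A` represented by some path. -/
def language (G : LabelledGraph V E A) : Set (List A) :=
  { α | ∃ l, G.IsPath l ∧ l.map G.lbl = α }

/-- `s(α)`: sources of paths representing the word `α`. -/
def srcSet (G : LabelledGraph V E A) (α : List A) : Set V :=
  { v | ∃ l, ∃ h : G.IsPath l, l.map G.lbl = α ∧ G.src (l.head h.1) = v }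

/-- `r(α)`: ranges of paths representing the word `α`. -/
def rngSet (G : LabelledGraph V E A) (α : List A) : Set V :=
  { v | ∃ l, ∃ h : G.IsPath l, l.map G.lbl = α ∧ G.rng (l.getLast h.1) = v }

/-- `r(S,α)`: the relative range of the word `α` with respect to the set `S` of vertices. -/
def relRng (G : LabelledGraph V E A) (S : Set V) (α : List A) : Set V :=
  { v | ∃ l, ∃ h : G.IsPath l,
      l.map G.lbl = α ∧ G.src (l.head h.1) ∈ S ∧ G.rng (l.getLast h.1) = v }

/-- A labelled graph is left-resolving if the labelling is injective on the set
of incoming edges of each vertex. -/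
def LeftResolving (G : LabelledGraph V E A) : Prop :=
  ∀ v : V, Set.InjOn G.lbl { e | G.rng e = v }

/-- A sink is a vertex emitting no edges. -/
def IsSink (G : LabelledGraph V E A) (v : V) : Prop := ∀ e : E, G.src e ≠ v

/-- A source is a vertex receiving no edges. -/
def IsSource (G : LabelledGraph V E A) (v : V) : Prop := ∀ e : E, G.rng e ≠ v

/-- `L¹_S`: the letters `a` (labelled paths of length one) with `S ∩ s(a) ≠ ∅`. -/
def L1 (G : LabelledGraph V E A) (S : Set V) : Set A :=
  { a | (S ∩ G.srcSet [a]).Nonempty }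

/-- `Lⁿ_S`: the words of length `n` whose source set meets `S`. -/
def Ln (G : LabelledGraph V E A) (S : Set V) (n : ℕ) : Set (List A) :=
  { α | α.length = n ∧ (S ∩ G.srcSet α).Nonempty }

/-- A collection `C` of subsets of vertices is accommodating for `G` if it contains all
ranges `r(α)`, is closed under relative ranges, and under finite intersections and unions. -/
structure Accommodating (G : LabelledGraph V E A) (C : Set (Set V)) : Prop where
  rng_mem : ∀ α ∈ G.language, G.rngSet α ∈ C
  relRng_mem : ∀ S ∈ C, ∀ α ∈ G.language, G.relRng S α ∈ C
  inter_mem : ∀ S ∈ C, ∀ T ∈ C, S ∩ T ∈ C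
  union_mem : ∀ S ∈ C, ∀ T ∈ C, S ∪ T ∈ C

/-- The labelled space `(E,π,C)` is weakly left-resolving. -/
def WeaklyLeftResolving (G : LabelledGraph V E A) (C : Set (Set V)) : Prop :=
  ∀ S ∈ C, ∀ T ∈ C, ∀ α ∈ G.language,
    G.relRng S α ∩ G.relRng T α = G.relRng (S ∩ T) α

/-- The labelled space `(E,π,C)` is set-finite. -/
def SetFinite (G : LabelledGraph V E A) (C : Set (Set V)) : Prop :=
  ∀ S ∈ C, (G.L1 S).Finite

/-- The collection `ℰ`. -/
def calE (G : LabelledGraph V E A) : Set (Set V) :=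
  { S | ∃ v, (G.IsSource v ∨ G.IsSink v) ∧ S = {v} } ∪
    (G.rngSet '' G.language) ∪ (G.srcSet '' G.language)

/-- The collection `ℰ₋`. -/
def calEminus (G : LabelledGraph V E A) : Set (Set V) :=
  { S | ∃ v, G.IsSink v ∧ S = {v} } ∪ (G.rngSet '' G.language)

/-- `ℰ⁰`: the smallest accommodating collection containing `ℰ`. -/
def E0 (G : LabelledGraph V E A) : Set (Set V) :=
  ⋂₀ { C | G.calE ⊆ C ∧ G.Accommodating C }

/-- `ℰ⁰₋`: the smallest accommodating collection containing `ℰ₋`. -/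
def E0minus (G : LabelledGraph V E A) : Set (Set V) :=
  ⋂₀ { C | G.calEminus ⊆ C ∧ G.Accommodating C }

/-- The dual labelled graph `(Ê,π̂)`: vertices are edges of `G`, edges are paths of
length two, labelled by the corresponding words of length two. -/
def dual (G : LabelledGraph V E A) :
    LabelledGraph E { ef : E × E // G.rng ef.1 = G.src ef.2 } (List A) where
  src ef := ef.1.1
  rng ef := ef.1.2
  lbl ef := [G.lbl ef.1.1, G.lbl ef.1.2]

end LabelledGraph

/-- The product `s_{a₁} ⋯ s_{aₙ}` associated to a word `a₁⋯aₙ` (with junk value `0` on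
the empty word). -/
def sWord {A B : Type*} [Mul B] [Zero B] (s : A → B) : List A → B
  | [] => 0
  | [a] => s a
  | a :: b :: l => s a * sWord s (b :: l)

namespace LabelledGraph

/-- A representation of the labelled space `(G, C)` in a C*-algebra `B`: a family of
projections `p S` for `S ∈ C` and partial isometries `s a` for `a ∈ ℒ¹` satisfying the
relations (i)-(iv). -/
structure IsRepresentation {V E A : Type*} (G : LabelledGraph V E A) (C : Set (Set V))
    {B : Type*} [NonUnitalRing B] [StarRing B] (p : Set V → B) (s : A → B) : Prop where
  p_star : ∀ S ∈ C, star (p S) = p S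
  p_idem : ∀ S ∈ C, p S * p S = p S
  s_partialIsometry : ∀ a, [a] ∈ G.language → s a * star (s a) * s a = s a
  p_empty : p ∅ = 0
  p_inter : ∀ S ∈ C, ∀ T ∈ C, p S * p T = p (S ∩ T)
  p_union : ∀ S ∈ C, ∀ T ∈ C, p (S ∪ T) = p S + p T - p (S ∩ T)
  p_mul_s : ∀ S ∈ C, ∀ a, [a] ∈ G.language → p S * s a = s a * p (G.relRng S [a])
  star_s_mul_s : ∀ a, [a] ∈ G.language → star (s a) * s a = p (G.rngSet [a])
  s_orth : ∀ a b, [a] ∈ G.language → [b] ∈ G.language → a ≠ b → star (s a) * s b = 0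
  cuntz_krieger : ∀ S ∈ C, ∀ hfin : (G.L1 S).Finite, (G.L1 S).Nonempty →
    p S = ∑ a ∈ hfin.toFinset, s a * p (G.relRng S [a]) * star (s a)

end LabelledGraph

/-- The C*-subalgebra of `B` generated by a set, as a subset of `B`: the closure of the
non-unital star subalgebra generated by the set. -/
def genCStar (B : Type*) [NonUnitalCStarAlgebra B] (gens : Set B) : Set B :=
  closure (NonUnitalStarAlgebra.adjoin ℂ gens : Set B)

/-- An action of the circle group `𝕋` by *-automorphisms on `B`, strongly continuous. -/
structure CircleAction (B : Type*) [NonUnitalCStarAlgebra B] where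
  act : Circle → B → B
  act_one : act 1 = id
  act_mul : ∀ z w, act (z * w) = act z ∘ act w
  act_bijective : ∀ z, Function.Bijective (act z)
  map_add : ∀ z x y, act z (x + y) = act z x + act z y
  map_mul : ∀ z x y, act z (x * y) = act z x * act z y
  map_smul : ∀ z (c : ℂ) x, act z (c • x) = c • act z x
  map_star : ∀ z x, act z (star x) = star (act z x)
  continuous : ∀ x, Continuous fun z => act z x

/-- A gauge action for a representation `{s_a, p_A}`: the circle action fixes the
projections and scales the partial isometries. -/
def IsGaugeAction {V E A : Type*} (G : LabelledGraph V E A) (C : Set (Set V))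
    {B : Type*} [NonUnitalCStarAlgebra B] (p : Set V → B) (s : A → B)
    (γ : CircleAction B) : Prop :=
  (∀ z a, [a] ∈ G.language → γ.act z (s a) = (z : ℂ) • s a) ∧
  (∀ z, ∀ S ∈ C, γ.act z (p S) = p S)

/-- A Cuntz–Krieger family for the directed graph underlying `G`. -/
structure IsCKFamily {V E A : Type*} (G : LabelledGraph V E A)
    {B : Type*} [NonUnitalRing B] [StarRing B] (p : V → B) (s : E → B) : Prop where
  p_star : ∀ v, star (p v) = p v
  p_idem : ∀ v, p v * p v = p v
  p_orth : ∀ v w, v ≠ w → p v * p w = 0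
  star_s_mul_s : ∀ e, star (s e) * s e = p (G.rng e)
  s_orth : ∀ e f, e ≠ f → star (s e) * s f = 0
  cuntz_krieger : ∀ v, (∃ e, G.src e = v) → ∀ hfin : {e | G.src e = v}.Finite,
    p v = ∑ e ∈ hfin.toFinset, s e * star (s e)

namespace LabelledGraph
variable {V E A : Type*} (G : LabelledGraph V E A)

lemma mem_relRng_single {S : Set V} {c : A} {v : V} :
    v ∈ G.relRng S [c] ↔ ∃ e, G.lbl e = c ∧ G.src e ∈ S ∧ G.rng e = v := by
  constructor
  · rintro ⟨l, h, hlbl, hsrc, hrng⟩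
    match l, hlbl with
    | [e], hlbl =>
      exact ⟨e, by simpa using hlbl, by simpa using hsrc, by simpa using hrng⟩
  · rintro ⟨e, h1, h2, h3⟩
    exact ⟨[e], ⟨by simp, List.isChain_singleton e⟩, by simp [h1], by simpa, by simpa⟩

lemma mem_relRng_cons {S : Set V} {c : A} {l : List A} (hl : l ≠ []) {v : V} :
    v ∈ G.relRng S (c :: l) ↔ v ∈ G.relRng (G.relRng S [c]) l := by
  constructor
  · rintro ⟨m, h, hlbl, hsrc, hrng⟩
    match m, h, hlbl with
    | e :: m, h, hlbl =>
      simp only [List.map_cons, List.cons.injEq] at hlbl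
      have hm : m ≠ [] := by rintro rfl; exact hl hlbl.2.symm
      have hch := h.2
      replace hch := List.isChain_cons.1 hch
      refine ⟨m, ⟨hm, hch.2⟩, hlbl.2, ?_, ?_⟩
      · refine G.mem_relRng_single.2 ⟨e, hlbl.1, by simpa using hsrc, ?_⟩
        exact hch.1 _ (List.head?_eq_head hm)
      · rwa [List.getLast_cons hm] at hrng
  · rintro ⟨m, h, hlbl, hsrc, hrng⟩
    obtain ⟨e, he1, he2, he3⟩ := G.mem_relRng_single.1 hsrc
    refine ⟨e :: m, ⟨by simp, ?_⟩, by simp [he1, hlbl], by simpa using he2, ?_⟩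
    · refine List.isChain_cons.2 ?_
      refine ⟨fun y hy => ?_, h.2⟩
      rw [List.head?_eq_head h.1] at hy
      simp only [Option.mem_def, Option.some.injEq] at hy
      rw [← hy]; exact he3
    · rwa [List.getLast_cons h.1]

lemma relRng_cons {S : Set V} {c : A} {l : List A} (hl : l ≠ []) :
    G.relRng (G.relRng S [c]) l = G.relRng S (c :: l) :=
  Set.ext fun _ => (G.mem_relRng_cons hl).symm

lemma rngSet_eq_relRng_univ (w : List A) : G.rngSet w = G.relRng Set.univ w := by
  ext v; constructor
  · rintro ⟨l, h, h1, h2⟩; exact ⟨l, h, h1, trivial, h2⟩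
  · rintro ⟨l, h, h1, _, h2⟩; exact ⟨l, h, h1, h2⟩

lemma relRng_append {S : Set V} {δ γ : List A} (hδ : δ ≠ []) (hγ : γ ≠ []) :
    G.relRng (G.relRng S δ) γ = G.relRng S (δ ++ γ) := by
  induction δ generalizing S with
  | nil => exact absurd rfl hδ
  | cons d δ' ih =>
    rcases eq_or_ne δ' [] with rfl | hδ'
    · simpa using (G.relRng_cons (S := S) (c := d) (by simp [hγ]) : _)
    · calc G.relRng (G.relRng S (d :: δ')) γ
          = G.relRng (G.relRng (G.relRng S [d]) δ') γ := by rw [G.relRng_cons hδ']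
        _ = G.relRng (G.relRng S [d]) (δ' ++ γ) := ih hδ'
        _ = G.relRng S (d :: δ' ++ γ) := by
            rw [List.cons_append]; exact G.relRng_cons (by simp [hδ'])

lemma rngSet_cons {c : A} {l : List A} (hl : l ≠ []) :
    G.relRng (G.rngSet [c]) l = G.rngSet (c :: l) := by
  rw [rngSet_eq_relRng_univ, rngSet_eq_relRng_univ, G.relRng_cons hl]

lemma relRng_subset_rngSet (S : Set V) (w : List A) : G.relRng S w ⊆ G.rngSet w := by
  rintro v ⟨l, h, h1, _, h2⟩; exact ⟨l, h, h1, h2⟩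

lemma rngSet_cons_subset {c : A} {l : List A} (hl : l ≠ []) :
    G.rngSet (c :: l) ⊆ G.rngSet l := by
  rw [← G.rngSet_cons hl, G.rngSet_eq_relRng_univ l]
  rintro v ⟨m, h, h1, _, h2⟩; exact ⟨m, h, h1, trivial, h2⟩

lemma lang_of_relRng_nonempty {S : Set V} {γ : List A} (h : (G.relRng S γ).Nonempty) :
    γ ∈ G.language := by
  obtain ⟨v, l, hp, h1, _, _⟩ := h
  exact ⟨l, hp, h1⟩

lemma lang_of_rngSet_nonempty {γ : List A} (h : (G.rngSet γ).Nonempty) :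
    γ ∈ G.language := by
  rw [rngSet_eq_relRng_univ] at h; exact G.lang_of_relRng_nonempty h

lemma rngSet_empty_of_not_lang {γ : List A} (h : γ ∉ G.language) : G.rngSet γ = ∅ := by
  by_contra hne
  exact h (G.lang_of_rngSet_nonempty (Set.nonempty_iff_ne_empty.2 hne))

lemma relRng_empty_of_not_lang {S : Set V} {γ : List A} (h : γ ∉ G.language) :
    G.relRng S γ = ∅ := by
  by_contra hne
  exact h (G.lang_of_relRng_nonempty (Set.nonempty_iff_ne_empty.2 hne))

lemma letter_lang {w : List A} (hw : w ∈ G.language) {a : A} (ha : a ∈ w) :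
    [a] ∈ G.language := by
  obtain ⟨l, hp, rfl⟩ := hw
  obtain ⟨e, _, rfl⟩ := List.mem_map.1 ha
  exact ⟨[e], ⟨by simp, List.isChain_singleton e⟩, by simp⟩

lemma tail_lang {a : A} {w : List A} (h : (a :: w) ∈ G.language) (hw : w ≠ []) :
    w ∈ G.language := by
  obtain ⟨l, hp, hlbl⟩ := h
  match l, hlbl with
  | e :: m, hlbl =>
    simp only [List.map_cons, List.cons.injEq] at hlbl
    have hm : m ≠ [] := by rintro rfl; exact hw hlbl.2.symm
    exact ⟨m, ⟨hm, (List.isChain_cons.1 hp.2).2⟩, hlbl.2⟩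

lemma lang_nonempty {w : List A} (h : w ∈ G.language) : w ≠ [] := by
  obtain ⟨l, hp, rfl⟩ := h
  simpa using hp.1

end LabelledGraph
set_option linter.unusedSectionVars false
section AuxB
variable {V E A : Type*} {B : Type*} [NonUnitalRing B] [StarRing B]
variable {G : LabelledGraph V E A} {C : Set (Set V)} {p : Set V → B} {s : A → B}

lemma sWord_cons (s : A → B) (a : A) {l : List A} (hl : l ≠ []) :
    sWord s (a :: l) = s a * sWord s l := by
  cases l with
  | nil => exact absurd rfl hl
  | cons b m => rfl

lemma sWord_append (s : A → B) {μ γ : List A} (hμ : μ ≠ []) (hγ : γ ≠ []) :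
    sWord s (μ ++ γ) = sWord s μ * sWord s γ := by
  induction μ with
  | nil => exact absurd rfl hμ
  | cons a μ' ih =>
    rcases eq_or_ne μ' [] with rfl | h
    · simpa [sWord] using sWord_cons s a hγ
    · rw [List.cons_append, sWord_cons s a (by simp [h]), ih h, sWord_cons s a h, mul_assoc]

lemma p_sWord (hrep : G.IsRepresentation C p s) (hC : G.Accommodating C)
    {S : Set V} (hS : S ∈ C) {γ : List A}
    (hγ : ∀ a ∈ γ, [a] ∈ G.language) (hne : γ ≠ []) :
    p S * sWord s γ = sWord s γ * p (G.relRng S γ) := by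
  induction γ generalizing S with
  | nil => exact absurd rfl hne
  | cons c l ih =>
    rcases eq_or_ne l [] with rfl | hl
    · exact hrep.p_mul_s S hS c (hγ c (by simp))
    · calc p S * sWord s (c :: l) = (p S * s c) * sWord s l := by
            rw [sWord_cons s c hl, mul_assoc]
        _ = s c * (p (G.relRng S [c]) * sWord s l) := by
            rw [hrep.p_mul_s S hS c (hγ c (by simp)), mul_assoc]
        _ = s c * (sWord s l * p (G.relRng (G.relRng S [c]) l)) := by
            rw [ih (hC.relRng_mem S hS [c] (hγ c (by simp)))
              (fun a ha => hγ a (by simp [ha])) hl]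
        _ = sWord s (c :: l) * p (G.relRng S (c :: l)) := by
            rw [G.relRng_cons hl, sWord_cons s c hl, mul_assoc]

lemma star_sWord_self (hrep : G.IsRepresentation C p s) (hC : G.Accommodating C)
    {ν : List A} (hν : ∀ a ∈ ν, [a] ∈ G.language) (hne : ν ≠ []) :
    star (sWord s ν) * sWord s ν = p (G.rngSet ν) := by
  induction ν with
  | nil => exact absurd rfl hne
  | cons c l ih =>
    rcases eq_or_ne l [] with rfl | hl
    · exact hrep.star_s_mul_s c (hν c (by simp))
    · have hc : [c] ∈ G.language := hν c (by simp)
      have hrc : G.rngSet [c] ∈ C := hC.rng_mem [c] hc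
      have step : star (sWord s (c :: l)) * sWord s (c :: l)
          = p (G.rngSet l) * p (G.rngSet (c :: l)) := by
        rw [sWord_cons s c hl, star_mul]
        calc star (sWord s l) * star (s c) * (s c * sWord s l)
            = star (sWord s l) * ((star (s c) * s c) * sWord s l) := by
              simp only [mul_assoc]
          _ = star (sWord s l) * (p (G.rngSet [c]) * sWord s l) := by
              rw [hrep.star_s_mul_s c hc]
          _ = star (sWord s l) * (sWord s l * p (G.relRng (G.rngSet [c]) l)) := by
              rw [p_sWord hrep hC hrc (fun a ha => hν a (by simp [ha])) hl]
          _ = (star (sWord s l) * sWord s l) * p (G.relRng (G.rngSet [c]) l) := by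
              rw [mul_assoc]
          _ = p (G.rngSet l) * p (G.rngSet (c :: l)) := by
              rw [ih (fun a ha => hν a (by simp [ha])) hl, G.rngSet_cons hl]
      rw [step]
      by_cases hcl : (c :: l) ∈ G.language
      · have hllang : l ∈ G.language := G.tail_lang hcl hl
        rw [hrep.p_inter _ (hC.rng_mem l hllang) _ (hC.rng_mem _ hcl),
          Set.inter_eq_self_of_subset_right (G.rngSet_cons_subset hl)]
      · rw [G.rngSet_empty_of_not_lang hcl, hrep.p_empty, mul_zero]

lemma star_sWord_orth (hrep : G.IsRepresentation C p s) (hC : G.Accommodating C)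
    {ν σ : List A} (hν : ∀ a ∈ ν, [a] ∈ G.language) (hσ : ∀ a ∈ σ, [a] ∈ G.language)
    (hlen : ν.length = σ.length) (hne : ν ≠ σ) (h0 : ν ≠ []) :
    star (sWord s ν) * sWord s σ = 0 := by
  induction ν generalizing σ with
  | nil => exact absurd rfl h0
  | cons c l ih =>
    cases σ with
    | nil => simp at hlen
    | cons d m =>
      have hc : [c] ∈ G.language := hν c (by simp)
      have hd : [d] ∈ G.language := hσ d (by simp)
      simp only [List.length_cons, Nat.add_right_cancel_iff] at hlen
      rcases eq_or_ne c d with rfl | hcd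
      · have hlm : l ≠ m := by rintro rfl; exact hne rfl
        have hl : l ≠ [] := by
          rintro rfl
          exact hlm (List.eq_nil_of_length_eq_zero hlen.symm).symm
        have hm : m ≠ [] := by
          rintro rfl
          exact hlm (List.eq_nil_of_length_eq_zero hlen)
        rw [sWord_cons s c hl, sWord_cons s c hm, star_mul]
        calc star (sWord s l) * star (s c) * (s c * sWord s m)
            = star (sWord s l) * ((star (s c) * s c) * sWord s m) := by
              simp only [mul_assoc]
          _ = star (sWord s l) * (p (G.rngSet [c]) * sWord s m) := by
              rw [hrep.star_s_mul_s c hc]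
          _ = star (sWord s l) * (sWord s m * p (G.relRng (G.rngSet [c]) m)) := by
              rw [p_sWord hrep hC (hC.rng_mem [c] hc) (fun a ha => hσ a (by simp [ha])) hm]
          _ = (star (sWord s l) * sWord s m) * p (G.relRng (G.rngSet [c]) m) := by
              rw [mul_assoc]
          _ = 0 := by
              rw [ih (fun a ha => hν a (by simp [ha])) (fun a ha => hσ a (by simp [ha]))
                hlen hlm hl, zero_mul]
      · rcases eq_or_ne l [] with rfl | hl
        · have hm : m = [] := List.eq_nil_of_length_eq_zero hlen.symm
          subst hm
          exact hrep.s_orth c d hc hd hcd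
        · have hm : m ≠ [] := by
            rintro rfl
            exact hl (List.eq_nil_of_length_eq_zero hlen)
          rw [sWord_cons s c hl, sWord_cons s d hm, star_mul]
          calc star (sWord s l) * star (s c) * (s d * sWord s m)
              = star (sWord s l) * ((star (s c) * s d) * sWord s m) := by
                simp only [mul_assoc]
            _ = 0 := by rw [hrep.s_orth c d hc hd hcd, zero_mul, mul_zero]

end AuxB
set_option linter.unusedSectionVars false
section AuxC
variable {V E A : Type*}

/-- `relRng` extended to allow the empty word. -/
def relRngE (G : LabelledGraph V E A) (S : Set V) (δ : List A) : Set V :=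
  match δ with
  | [] => S
  | _ :: _ => G.relRng S δ

lemma relRngE_nil (G : LabelledGraph V E A) (S : Set V) : relRngE G S [] = S := rfl

lemma relRngE_ne (G : LabelledGraph V E A) (S : Set V) {δ : List A} (h : δ ≠ []) :
    relRngE G S δ = G.relRng S δ := by
  cases δ with
  | nil => exact absurd rfl h
  | cons a l => rfl

/-- Nonempty words of bounded length over a fixed alphabet. -/
def WordsOn (Letters : Set A) (L : ℕ) : Set (List A) :=
  {w | w ≠ [] ∧ w.length ≤ L ∧ ∀ a ∈ w, a ∈ Letters}

/-- Basic building blocks for the projection sets. -/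
def FamP (G : LabelledGraph V E A) (Base0 : Set (Set V)) (Letters : Set A) (n : ℕ)
    (T : Set V) : Prop :=
  ∃ B₀ ∈ Base0, ∃ δ : List A, δ.length < n ∧ (∀ a ∈ δ, a ∈ Letters) ∧
    (δ = [] ∨ δ ∈ G.language) ∧ T = relRngE G B₀ δ

/-- The family of projection sets appearing in matrix units with left word of length `n`. -/
def Fam (G : LabelledGraph V E A) (Base0 : Set (Set V)) (Letters : Set A) (n : ℕ) :
    Set (Set V) :=
  {S | ∃ t : Set (Set V), t.Finite ∧ t.Nonempty ∧ (∀ T ∈ t, FamP G Base0 Letters n T) ∧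
    S = ⋂₀ t}

variable {G : LabelledGraph V E A} {C : Set (Set V)} {Base0 : Set (Set V)} {Letters : Set A}

lemma famP_mem_C (hC : G.Accommodating C) (hB0C : Base0 ⊆ C) {n : ℕ} {T : Set V}
    (h : FamP G Base0 Letters n T) : T ∈ C := by
  obtain ⟨B₀, hB₀, δ, _, _, hδl, rfl⟩ := h
  rcases hδl with rfl | hδl
  · simpa [relRngE_nil] using hB0C hB₀
  · rw [relRngE_ne G B₀ (G.lang_nonempty hδl)]
    exact hC.relRng_mem B₀ (hB0C hB₀) δ hδl

lemma inter_sInter_mem_C (hC : G.Accommodating C) {t : Set (Set V)} (ht : t.Finite) :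
    t ⊆ C → ∀ S₀ ∈ C, S₀ ∩ ⋂₀ t ∈ C := by
  refine Set.Finite.induction_on t ht (fun _ S₀ hS₀ => by simpa using hS₀) ?_
  intro T t' _ _ ih hsub S₀ hS₀
  rw [Set.sInter_insert, ← Set.inter_assoc]
  exact ih (fun x hx => hsub (Set.mem_insert_of_mem _ hx)) _
    (hC.inter_mem S₀ hS₀ T (hsub (Set.mem_insert _ _)))

lemma sInter_mem_C (hC : G.Accommodating C) {t : Set (Set V)} (ht : t.Finite)
    (hne : t.Nonempty) (hsub : t ⊆ C) : ⋂₀ t ∈ C := by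
  obtain ⟨S₀, h₀⟩ := hne
  have h := inter_sInter_mem_C hC ht hsub S₀ (hsub h₀)
  rwa [Set.inter_eq_self_of_subset_right (Set.sInter_subset_of_mem h₀)] at h

lemma fam_subset_C (hC : G.Accommodating C) (hB0C : Base0 ⊆ C) {n : ℕ} :
    Fam G Base0 Letters n ⊆ C := by
  rintro S ⟨t, htf, htne, htp, rfl⟩
  exact sInter_mem_C hC htf htne (fun T hT => famP_mem_C hC hB0C (htp T hT))

lemma relRng_inter_sInter (hC : G.Accommodating C) (hwlr : G.WeaklyLeftResolving C)
    {γ : List A} (hγ : γ ∈ G.language) {t : Set (Set V)} (ht : t.Finite) :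
    t ⊆ C → ∀ S₀ ∈ C, G.relRng (S₀ ∩ ⋂₀ t) γ
      = G.relRng S₀ γ ∩ ⋂₀ ((fun T => G.relRng T γ) '' t) := by
  refine Set.Finite.induction_on t ht (fun _ S₀ _ => by simp) ?_
  intro T t' _ _ ih hsub S₀ hS₀
  have hT : T ∈ C := hsub (Set.mem_insert _ _)
  rw [Set.sInter_insert, ← Set.inter_assoc,
    ih (fun x hx => hsub (Set.mem_insert_of_mem _ hx)) _ (hC.inter_mem S₀ hS₀ T hT),
    Set.image_insert_eq, Set.sInter_insert,
    ← hwlr S₀ hS₀ T hT γ hγ, Set.inter_assoc]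

lemma relRng_sInter (hC : G.Accommodating C) (hwlr : G.WeaklyLeftResolving C)
    {γ : List A} (hγ : γ ∈ G.language) {t : Set (Set V)} (ht : t.Finite)
    (hne : t.Nonempty) (hsub : t ⊆ C) :
    G.relRng (⋂₀ t) γ = ⋂₀ ((fun T => G.relRng T γ) '' t) := by
  obtain ⟨S₀, h₀⟩ := hne
  have h := relRng_inter_sInter hC hwlr hγ ht hsub S₀ (hsub h₀)
  rw [Set.inter_eq_self_of_subset_right (Set.sInter_subset_of_mem h₀)] at h
  rw [h]
  exact Set.inter_eq_self_of_subset_right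
    (Set.sInter_subset_of_mem (Set.mem_image_of_mem _ h₀))

lemma wordsOn_aux_finite (hL : Letters.Finite) (L : ℕ) :
    {w : List A | w.length ≤ L ∧ ∀ a ∈ w, a ∈ Letters}.Finite := by
  have := hL.to_subtype
  refine Set.Finite.subset ((List.finite_length_le ↥Letters L).image (List.map Subtype.val)) ?_
  rintro w ⟨hlen, hmem⟩
  refine ⟨w.pmap (fun a h => (⟨a, h⟩ : ↥Letters)) hmem, by simpa using hlen, ?_⟩
  simp [List.map_pmap]

lemma wordsOn_finite (hL : Letters.Finite) (L : ℕ) : (WordsOn Letters L).Finite :=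
  (wordsOn_aux_finite hL L).subset fun _ h => ⟨h.2.1, h.2.2⟩

lemma fam_finite (hL : Letters.Finite) (hB : Base0.Finite) {L n : ℕ} (hn : n ≤ L) :
    (Fam G Base0 Letters n).Finite := by
  set BigBase : Set (Set V) :=
    (fun x : Set V × List A => relRngE G x.1 x.2) ''
      (Base0 ×ˢ {δ : List A | δ.length ≤ L ∧ ∀ a ∈ δ, a ∈ Letters}) with hBB
  have hBBfin : BigBase.Finite := (hB.prod (wordsOn_aux_finite hL L)).image _
  refine Set.Finite.subset ((hBBfin.finite_subsets).image Set.sInter) ?_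
  rintro S ⟨t, htf, htne, htp, rfl⟩
  refine ⟨t, ?_, rfl⟩
  intro T hT
  obtain ⟨B₀, hB₀, δ, hδn, hδSig, _, rfl⟩ := htp T hT
  exact ⟨(B₀, δ), ⟨hB₀, le_of_lt (lt_of_lt_of_le hδn hn), hδSig⟩, rfl⟩

lemma fam_mono {n n' : ℕ} (h : n ≤ n') : Fam G Base0 Letters n ⊆ Fam G Base0 Letters n' := by
  rintro S ⟨t, htf, htne, htp, rfl⟩
  refine ⟨t, htf, htne, fun T hT => ?_, rfl⟩
  obtain ⟨B₀, hB₀, δ, hδn, h2, h3, h4⟩ := htp T hT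
  exact ⟨B₀, hB₀, δ, lt_of_lt_of_le hδn h, h2, h3, h4⟩

lemma fam_inter {n : ℕ} {S S' : Set V} (hS : S ∈ Fam G Base0 Letters n)
    (hS' : S' ∈ Fam G Base0 Letters n) : S ∩ S' ∈ Fam G Base0 Letters n := by
  obtain ⟨t, htf, htne, htp, rfl⟩ := hS
  obtain ⟨t', htf', htne', htp', rfl⟩ := hS'
  exact ⟨t ∪ t', htf.union htf', htne.mono Set.subset_union_left,
    fun T hT => hT.elim (htp T) (htp' T), (Set.sInter_union t t').symm⟩

lemma fam_base {n : ℕ} {S : Set V} (hB : S ∈ Base0) (hn : 0 < n) :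
    S ∈ Fam G Base0 Letters n :=
  ⟨{S}, Set.finite_singleton S, Set.singleton_nonempty S,
    fun T hT => ⟨S, hB, [], by simpa using hn, by simp, Or.inl rfl, by
      simp only [Set.mem_singleton_iff] at hT; simp [hT, relRngE_nil]⟩,
    (Set.sInter_singleton S).symm⟩

lemma fam_rngSet (hB : ∀ a ∈ Letters, G.rngSet [a] ∈ Base0) {ν : List A}
    (hν : ν ∈ G.language) (hνSig : ∀ a ∈ ν, a ∈ Letters) {n : ℕ} (hn : ν.length ≤ n) :
    G.rngSet ν ∈ Fam G Base0 Letters n := by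
  cases ν with
  | nil => exact absurd rfl (G.lang_nonempty hν)
  | cons c l =>
    have hc : c ∈ Letters := hνSig c (by simp)
    refine ⟨{G.rngSet (c :: l)}, Set.finite_singleton _, Set.singleton_nonempty _,
      fun T hT => ?_, (Set.sInter_singleton _).symm⟩
    simp only [Set.mem_singleton_iff] at hT
    subst hT
    rcases eq_or_ne l [] with rfl | hl
    · refine ⟨G.rngSet [c], hB c hc, [], by simp at hn ⊢; omega, by simp, Or.inl rfl, by
        simp [relRngE_nil]⟩
    · refine ⟨G.rngSet [c], hB c hc, l, ?_, fun a ha => hνSig a (by simp [ha]),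
        Or.inr (G.tail_lang hν hl), ?_⟩
      · simp only [List.length_cons] at hn; omega
      · rw [relRngE_ne G _ hl, G.rngSet_cons hl]

lemma fam_relRng (hC : G.Accommodating C) (hwlr : G.WeaklyLeftResolving C)
    (hB0C : Base0 ⊆ C) {S : Set V} {n : ℕ} (hS : S ∈ Fam G Base0 Letters n)
    {γ : List A} (hγl : γ ∈ G.language) (hγSig : ∀ a ∈ γ, a ∈ Letters) :
    G.relRng S γ = ∅ ∨ G.relRng S γ ∈ Fam G Base0 Letters (n + γ.length) := by
  obtain ⟨t, htf, htne, htp, rfl⟩ := hS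
  have hsub : t ⊆ C := fun T hT => famP_mem_C hC hB0C (htp T hT)
  have hγne : γ ≠ [] := G.lang_nonempty hγl
  rw [relRng_sInter hC hwlr hγl htf htne hsub]
  by_cases hz : ∃ T ∈ t, G.relRng T γ = ∅
  · left
    obtain ⟨T, hT, hTz⟩ := hz
    exact Set.eq_empty_of_subset_empty
      (hTz ▸ Set.sInter_subset_of_mem (Set.mem_image_of_mem _ hT))
  · right
    push_neg at hz
    refine ⟨_, htf.image _, htne.image _, ?_, rfl⟩
    rintro _ ⟨T, hT, rfl⟩
    obtain ⟨B₀, hB₀, δ, hδn, hδSig, hδl, rfl⟩ := htp T hT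
    have hcomp : G.relRng (relRngE G B₀ δ) γ = G.relRng B₀ (δ ++ γ) := by
      rcases hδl with rfl | hδl
      · simp [relRngE_nil]
      · rw [relRngE_ne G _ (G.lang_nonempty hδl),
          G.relRng_append (G.lang_nonempty hδl) hγne]
    refine ⟨B₀, hB₀, δ ++ γ, ?_, ?_, ?_, ?_⟩
    · simp only [List.length_append]; omega
    · intro a ha
      rcases List.mem_append.1 ha with h | h
      · exact hδSig a h
      · exact hγSig a h
    · have hne2 : (G.relRng B₀ (δ ++ γ)).Nonempty := by
        rw [← hcomp]; exact hz _ hT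
      exact Or.inr (G.lang_of_relRng_nonempty hne2)
    · show G.relRng (relRngE G B₀ δ) γ = relRngE G B₀ (δ ++ γ)
      rw [hcomp, relRngE_ne G _ (by simp [hγne])]

end AuxC
section AuxD
variable {V E A : Type*} {B : Type*} [NonUnitalCStarAlgebra B]

/-- Index triples for the spanning matrix units. -/
def TT (G : LabelledGraph V E A) (Base0 : Set (Set V)) (Letters : Set A) (L : ℕ) :
    Set (List A × Set V × List A) :=
  {x | x.1 ∈ WordsOn Letters L ∧ x.2.2 ∈ WordsOn Letters L ∧ x.1.length = x.2.2.length ∧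
    (x.2.1 = ∅ ∨ x.2.1 ∈ Fam G Base0 Letters x.1.length)}

/-- The finite spanning set of matrix units. -/
def FF (G : LabelledGraph V E A) (p : Set V → B) (s : A → B) (Base0 : Set (Set V))
    (Letters : Set A) (L : ℕ) : Set B :=
  (fun x : List A × Set V × List A => sWord s x.1 * p x.2.1 * star (sWord s x.2.2)) ''
    TT G Base0 Letters L

variable {G : LabelledGraph V E A} {C Base0 : Set (Set V)} {Letters : Set A}
  {p : Set V → B} {s : A → B} {L : ℕ}

lemma TT_finite (hL : Letters.Finite) (hB : Base0.Finite) : (TT G Base0 Letters L).Finite := by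
  refine Set.Finite.subset ((wordsOn_finite hL L).prod
    (((fam_finite (G := G) (L := L) (n := L) hL hB le_rfl).insert ∅).prod
      (wordsOn_finite hL L))) ?_
  rintro ⟨μ, S, ν⟩ ⟨h1, h2, _, h4⟩
  refine ⟨h1, ?_, h2⟩
  rcases h4 with rfl | h4
  · exact Set.mem_insert _ _
  · exact Set.mem_insert_of_mem _ (fam_mono h1.2.1 h4)

lemma FF_finite (hL : Letters.Finite) (hB : Base0.Finite) :
    (FF G p s Base0 Letters L).Finite :=
  (TT_finite hL hB).image _

lemma star_p_eq (hrep : G.IsRepresentation C p s) {S : Set V} (hS : S = ∅ ∨ S ∈ C) :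
    star (p S) = p S := by
  rcases hS with rfl | hS
  · rw [hrep.p_empty, star_zero]
  · exact hrep.p_star S hS

lemma star_triple (hrep : G.IsRepresentation C p s) {S : Set V} (hS : S = ∅ ∨ S ∈ C)
    (μ ν : List A) :
    star (sWord s μ * p S * star (sWord s ν)) = sWord s ν * p S * star (sWord s μ) := by
  rw [star_mul, star_mul, star_star, star_p_eq hrep hS, mul_assoc]

lemma star_mem_FF (hC : G.Accommodating C) (hrep : G.IsRepresentation C p s)
    (hB0C : Base0 ⊆ C) {x : B} (hx : x ∈ FF G p s Base0 Letters L) :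
    star x ∈ FF G p s Base0 Letters L := by
  obtain ⟨⟨μ, S, ν⟩, ⟨hμ, hν, hlen, hSF⟩, rfl⟩ := hx
  have hS : S = ∅ ∨ S ∈ C := hSF.imp id (fun h => fam_subset_C hC hB0C h)
  refine ⟨(ν, S, μ), ⟨hν, hμ, hlen.symm, ?_⟩, (star_triple hrep hS μ ν).symm⟩
  rcases hSF with rfl | hSF
  · exact Or.inl rfl
  · exact Or.inr (by rw [show (ν, S, μ).1.length = μ.length from hlen.symm]; exact hSF)

lemma star_mem_span {F : Set B} (hF : ∀ x ∈ F, star x ∈ F) {x : B}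
    (hx : x ∈ Submodule.span ℂ F) : star x ∈ Submodule.span ℂ F := by
  induction hx using Submodule.span_induction with
  | mem y h => exact Submodule.subset_span (hF y h)
  | zero => simpa using Submodule.zero_mem _
  | add y z _ _ hy hz => rw [star_add]; exact add_mem hy hz
  | smul c y _ hy => rw [star_smul]; exact Submodule.smul_mem _ _ hy

lemma mul_FF_aux (hC : G.Accommodating C) (hwlr : G.WeaklyLeftResolving C)
    (hrep : G.IsRepresentation C p s) (hB0C : Base0 ⊆ C)
    (hBr : ∀ a ∈ Letters, G.rngSet [a] ∈ Base0)
    (hLet : ∀ a ∈ Letters, [a] ∈ G.language)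
    {μ ν μ' ν' : List A} {S S' : Set V}
    (hx : (μ, S, ν) ∈ TT G Base0 Letters L) (hy : (μ', S', ν') ∈ TT G Base0 Letters L)
    (hord : ν.length ≤ μ'.length) :
    (sWord s μ * p S * star (sWord s ν)) * (sWord s μ' * p S' * star (sWord s ν'))
      ∈ Submodule.span ℂ (FF G p s Base0 Letters L) := by
  obtain ⟨hμW, hνW, hlen1, hSd⟩ := hx
  obtain ⟨hμ'W, hν'W, hlen2, hS'd⟩ := hy
  simp only at hμW hνW hμ'W hν'W hlen1 hlen2 hSd hS'd
  rcases hSd with rfl | hSF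
  · simp only [hrep.p_empty, mul_zero, zero_mul]
    exact Submodule.zero_mem _
  rcases hS'd with rfl | hS'F
  · simp only [hrep.p_empty, mul_zero, zero_mul]
    exact Submodule.zero_mem _
  have hSC : S ∈ C := fam_subset_C hC hB0C hSF
  have hS'C : S' ∈ C := fam_subset_C hC hB0C hS'F
  have hνlang1 : ∀ a ∈ ν, [a] ∈ G.language := fun a ha => hLet a (hνW.2.2 a ha)
  have hμlang1 : ∀ a ∈ μ, [a] ∈ G.language := fun a ha => hLet a (hμW.2.2 a ha)
  set σ := μ'.take ν.length with hσdef
  set γ := μ'.drop ν.length with hγdef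
  have hσγ : σ ++ γ = μ' := List.take_append_drop _ _
  have hσlen : σ.length = ν.length := by
    rw [hσdef, List.length_take]; exact min_eq_left hord
  have hσne : σ ≠ [] := by
    intro h
    rw [h] at hσlen
    simp only [List.length_nil] at hσlen
    exact hνW.1 (List.eq_nil_of_length_eq_zero hσlen.symm)
  have hσLet : ∀ a ∈ σ, a ∈ Letters := fun a ha =>
    hμ'W.2.2 a (List.mem_of_mem_take ha)
  have hγLet : ∀ a ∈ γ, a ∈ Letters := fun a ha =>
    hμ'W.2.2 a (List.mem_of_mem_drop ha)
  have hσlang1 : ∀ a ∈ σ, [a] ∈ G.language := fun a ha => hLet a (hσLet a ha)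
  have hγlang1 : ∀ a ∈ γ, [a] ∈ G.language := fun a ha => hLet a (hγLet a ha)
  by_cases hvs : ν = σ
  · -- main case : the words match
    rcases eq_or_ne γ [] with hγE | hγne
    · -- `ν = μ'`
      have hμ'ν : μ' = ν := by rw [← hσγ, hγE, List.append_nil]; exact hvs.symm
      rw [hμ'ν]
      have e1 : (sWord s μ * p S * star (sWord s ν)) * (sWord s ν * p S' * star (sWord s ν'))
          = sWord s μ * (p S * (star (sWord s ν) * sWord s ν) * p S') * star (sWord s ν') := by
        simp only [mul_assoc]
      rw [star_sWord_self hrep hC hνlang1 hνW.1] at e1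
      by_cases hνlang : ν ∈ G.language
      · have hrC : G.rngSet ν ∈ C := hC.rng_mem ν hνlang
        rw [hrep.p_inter S hSC _ hrC, hrep.p_inter _ (hC.inter_mem S hSC _ hrC) S' hS'C] at e1
        rw [e1]
        apply Submodule.subset_span
        refine ⟨(μ, S ∩ G.rngSet ν ∩ S', ν'), ⟨hμW, hν'W, ?_, Or.inr ?_⟩, rfl⟩
        · show μ.length = ν'.length
          rw [hlen1, ← hμ'ν, hlen2]
        · show S ∩ G.rngSet ν ∩ S' ∈ Fam G Base0 Letters μ.length
          have h1 : G.rngSet ν ∈ Fam G Base0 Letters μ.length :=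
            fam_rngSet hBr hνlang hνW.2.2 (le_of_eq hlen1.symm)
          have h2 : S' ∈ Fam G Base0 Letters μ.length := by
            have : μ'.length = μ.length := by rw [hμ'ν, ← hlen1]
            rw [← this]; exact hS'F
          exact fam_inter (fam_inter hSF h1) h2
      · rw [G.rngSet_empty_of_not_lang hνlang, hrep.p_empty] at e1
        rw [e1]
        simp only [mul_zero, zero_mul]
        exact Submodule.zero_mem _
    · -- `μ' = σ ++ γ` with `γ ≠ []`
      have e1 : (sWord s μ * p S * star (sWord s ν)) * (sWord s μ' * p S' * star (sWord s ν'))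
          = sWord s μ * ((p S * (star (sWord s ν) * sWord s σ)) * (sWord s γ * p S'))
              * star (sWord s ν') := by
        rw [← hσγ, sWord_append s hσne hγne]; simp only [mul_assoc]
      have hself : star (sWord s ν) * sWord s σ = p (G.rngSet ν) := by
        rw [← hvs]; exact star_sWord_self hrep hC hνlang1 hνW.1
      rw [hself] at e1
      by_cases hνlang : ν ∈ G.language
      · have hrC : G.rngSet ν ∈ C := hC.rng_mem ν hνlang
        rw [hrep.p_inter S hSC _ hrC] at e1
        have hS1C : S ∩ G.rngSet ν ∈ C := hC.inter_mem S hSC _ hrC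
        have e2 : p (S ∩ G.rngSet ν) * (sWord s γ * p S')
            = sWord s γ * (p (G.relRng (S ∩ G.rngSet ν) γ) * p S') := by
          rw [← mul_assoc, p_sWord hrep hC hS1C hγlang1 hγne, mul_assoc]
        rw [e2] at e1
        by_cases hγlang : γ ∈ G.language
        · have hRC : G.relRng (S ∩ G.rngSet ν) γ ∈ C := hC.relRng_mem _ hS1C γ hγlang
          rw [hrep.p_inter _ hRC S' hS'C] at e1
          have e3 : sWord s μ * (sWord s γ * (p (G.relRng (S ∩ G.rngSet ν) γ ∩ S')))
                * star (sWord s ν')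
              = sWord s (μ ++ γ) * p (G.relRng (S ∩ G.rngSet ν) γ ∩ S')
                * star (sWord s ν') := by
            rw [sWord_append s hμW.1 hγne]; simp only [mul_assoc]
          rw [e1, e3]
          apply Submodule.subset_span
          have hlenμγ : (μ ++ γ).length = μ'.length := by
            rw [List.length_append, hlen1, hγdef, List.length_drop]
            omega
          refine ⟨(μ ++ γ, G.relRng (S ∩ G.rngSet ν) γ ∩ S', ν'),
            ⟨⟨by simp [hμW.1], ?_, ?_⟩, hν'W, ?_, ?_⟩, rfl⟩
          · rw [hlenμγ]; exact hμ'W.2.1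
          · intro a ha
            rcases List.mem_append.1 ha with h | h
            · exact hμW.2.2 a h
            · exact hγLet a h
          · show (μ ++ γ).length = ν'.length
            rw [hlenμγ, hlen2]
          · show G.relRng (S ∩ G.rngSet ν) γ ∩ S' = ∅ ∨ _ ∈ Fam G Base0 Letters (μ ++ γ).length
            have hS1F : S ∩ G.rngSet ν ∈ Fam G Base0 Letters μ.length :=
              fam_inter hSF (fam_rngSet hBr hνlang hνW.2.2 (le_of_eq hlen1.symm))
            rcases fam_relRng hC hwlr hB0C hS1F hγlang hγLet with hz | hfam
            · exact Or.inl (by rw [hz, Set.empty_inter])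
            · refine Or.inr ?_
              have h2 : S' ∈ Fam G Base0 Letters (μ.length + γ.length) := by
                have : μ'.length = μ.length + γ.length := by
                  rw [← hlenμγ, List.length_append]
                rw [← this]; exact hS'F
              rw [List.length_append]
              exact fam_inter hfam h2
        · rw [G.relRng_empty_of_not_lang hγlang, hrep.p_empty] at e1
          rw [e1]
          simp only [mul_zero, zero_mul]
          exact Submodule.zero_mem _
      · rw [G.rngSet_empty_of_not_lang hνlang, hrep.p_empty] at e1
        rw [e1]
        simp only [mul_zero, zero_mul]
        exact Submodule.zero_mem _
  · -- the words do not match : the product vanishes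
    have hkey : star (sWord s ν) * sWord s μ' = 0 := by
      rcases eq_or_ne γ [] with hγE | hγne
      · have hσμ' : σ = μ' := by rw [← hσγ, hγE, List.append_nil]
        rw [← hσμ']
        exact star_sWord_orth hrep hC hνlang1 hσlang1 hσlen.symm hvs hνW.1
      · rw [← hσγ, sWord_append s hσne hγne, ← mul_assoc,
          star_sWord_orth hrep hC hνlang1 hσlang1 hσlen.symm hvs hνW.1, zero_mul]
    have e0 : (sWord s μ * p S * star (sWord s ν)) * (sWord s μ' * p S' * star (sWord s ν'))
        = (sWord s μ * p S) * ((star (sWord s ν) * sWord s μ') * (p S' * star (sWord s ν'))) := by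
      simp only [mul_assoc]
    rw [e0, hkey, zero_mul, mul_zero]
    exact Submodule.zero_mem _

lemma mul_FF (hC : G.Accommodating C) (hwlr : G.WeaklyLeftResolving C)
    (hrep : G.IsRepresentation C p s) (hB0C : Base0 ⊆ C)
    (hBr : ∀ a ∈ Letters, G.rngSet [a] ∈ Base0)
    (hLet : ∀ a ∈ Letters, [a] ∈ G.language) :
    ∀ x ∈ FF G p s Base0 Letters L, ∀ y ∈ FF G p s Base0 Letters L,
      x * y ∈ Submodule.span ℂ (FF G p s Base0 Letters L) := by
  rintro x ⟨⟨μ, S, ν⟩, hxT, rfl⟩ y ⟨⟨μ', S', ν'⟩, hyT, rfl⟩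
  have hS : S = ∅ ∨ S ∈ C := hxT.2.2.2.imp id (fun h => fam_subset_C hC hB0C h)
  have hS' : S' = ∅ ∨ S' ∈ C := hyT.2.2.2.imp id (fun h => fam_subset_C hC hB0C h)
  rcases le_or_gt ν.length μ'.length with h | h
  · exact mul_FF_aux hC hwlr hrep hB0C hBr hLet hxT hyT h
  · have hyT' : (ν', S', μ') ∈ TT G Base0 Letters L := by
      obtain ⟨h1, h2, h3, h4⟩ := hyT
      refine ⟨h2, h1, h3.symm, ?_⟩
      rcases h4 with rfl | h4
      · exact Or.inl rfl
      · exact Or.inr (by rw [show (ν', S', μ').1.length = μ'.length from h3.symm]; exact h4)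
    have hxT' : (ν, S, μ) ∈ TT G Base0 Letters L := by
      obtain ⟨h1, h2, h3, h4⟩ := hxT
      refine ⟨h2, h1, h3.symm, ?_⟩
      rcases h4 with rfl | h4
      · exact Or.inl rfl
      · exact Or.inr (by rw [show (ν, S, μ).1.length = μ.length from h3.symm]; exact h4)
    have hord' : μ'.length ≤ ν.length := h.le
    have hz := mul_FF_aux hC hwlr hrep hB0C hBr hLet hyT' hxT' hord'
    have e : (sWord s μ * p S * star (sWord s ν)) * (sWord s μ' * p S' * star (sWord s ν'))
        = star ((sWord s ν' * p S' * star (sWord s μ')) * (sWord s ν * p S * star (sWord s μ))) := by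
      rw [star_mul, star_triple hrep hS ν μ, star_triple hrep hS' ν' μ']
    rw [e]
    exact star_mem_span (fun z hz => star_mem_FF hC hrep hB0C hz) hz

end AuxD
theorem cstar_of_matrix_units_finiteDimensional {V E A : Type*} [Countable V] [Countable E]
    {B : Type*} [NonUnitalCStarAlgebra B]
    (G : LabelledGraph V E A) (C : Set (Set V))
    (hC : G.Accommodating C) (hwlr : G.WeaklyLeftResolving C)
    (p : Set V → B) (s : A → B) (hrep : G.IsRepresentation C p s)
    (N : ℕ) (α β : Fin N → List A) (As : Fin N → Set V)
    (hα : ∀ i, α i ∈ G.language) (hβ : ∀ i, β i ∈ G.language)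
    (hlen : ∀ i, (α i).length = (β i).length)
    (hAs : ∀ i, As i ∈ C)
    (hsub : ∀ i, As i ⊆ G.rngSet (α i) ∩ G.rngSet (β i)) :
    FiniteDimensional ℂ (Submodule.span ℂ
      (genCStar B (Set.range fun i => sWord s (α i) * p (As i) * star (sWord s (β i))))) := by
  classical
  set Letters : Set A := {a | ∃ i, a ∈ α i ∨ a ∈ β i} with hLdef
  have hLet : ∀ a ∈ Letters, [a] ∈ G.language := by
    rintro a ⟨i, h | h⟩
    · exact G.letter_lang (hα i) h
    · exact G.letter_lang (hβ i) h
  have hLfin : Letters.Finite := by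
    have heq : Letters = ⋃ i : Fin N, ({a | a ∈ α i} ∪ {a | a ∈ β i}) := by
      ext a
      simp [hLdef, Set.mem_iUnion]
    rw [heq]
    exact Set.finite_iUnion fun i => (α i).finite_toSet.union (β i).finite_toSet
  set L : ℕ := Finset.univ.sup fun i => (α i).length with hLsup
  set Base0 : Set (Set V) := Set.range As ∪ ((fun a => G.rngSet [a]) '' Letters) with hB0def
  have hB0fin : Base0.Finite := (Set.finite_range As).union (hLfin.image _)
  have hB0C : Base0 ⊆ C := by
    rintro S (⟨i, rfl⟩ | ⟨a, ha, rfl⟩)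
    · exact hAs i
    · exact hC.rng_mem [a] (hLet a ha)
  have hBr : ∀ a ∈ Letters, G.rngSet [a] ∈ Base0 := fun a ha => Or.inr ⟨a, ha, rfl⟩
  have hFfin := FF_finite (G := G) (p := p) (s := s) (L := L) hLfin hB0fin
  set M := Submodule.span ℂ (FF G p s Base0 Letters L) with hMdef
  haveI : FiniteDimensional ℂ M := FiniteDimensional.span_of_finite ℂ hFfin
  have hmul := mul_FF (L := L) hC hwlr hrep hB0C hBr hLet
  have hstarF : ∀ x ∈ FF G p s Base0 Letters L, star x ∈ FF G p s Base0 Letters L :=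
    fun x hx => star_mem_FF hC hrep hB0C hx
  have key : ∀ x ∈ FF G p s Base0 Letters L, ∀ y ∈ M, x * y ∈ M := by
    intro x hx y hy
    induction hy using Submodule.span_induction with
    | mem w hw => exact hmul x hx w hw
    | zero => rw [mul_zero]; exact M.zero_mem
    | add u v _ _ hu hv => rw [mul_add]; exact add_mem hu hv
    | smul c u _ hu => rw [mul_smul_comm]; exact M.smul_mem c hu
  have hmulM : ∀ x ∈ M, ∀ y ∈ M, x * y ∈ M := by
    intro x hx y hy
    induction hx using Submodule.span_induction with
    | mem w hw => exact key w hw y hy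
    | zero => rw [zero_mul]; exact M.zero_mem
    | add u v _ _ hu hv => rw [add_mul]; exact add_mem hu hv
    | smul c u _ hu => rw [smul_mul_assoc]; exact M.smul_mem c hu
  let Salg : NonUnitalStarSubalgebra ℂ B :=
    { carrier := (M : Set B)
      add_mem' := fun {a b} ha hb => M.add_mem ha hb
      zero_mem' := M.zero_mem
      mul_mem' := fun {a b} ha hb => hmulM a ha b hb
      smul_mem' := fun c {x} hx => M.smul_mem c hx
      star_mem' := fun {x} hx => star_mem_span hstarF hx }
  have hY : (Set.range fun i => sWord s (α i) * p (As i) * star (sWord s (β i)))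
      ⊆ (Salg : Set B) := by
    rintro x ⟨i, rfl⟩
    apply Submodule.subset_span
    refine ⟨(α i, As i, β i),
      ⟨⟨G.lang_nonempty (hα i), by
          show (α i).length ≤ L
          rw [hLsup]
          exact Finset.le_sup (f := fun i => (α i).length) (Finset.mem_univ i),
          fun a ha => ⟨i, Or.inl ha⟩⟩,
        ⟨G.lang_nonempty (hβ i), by
          show (β i).length ≤ L
          rw [← hlen i, hLsup]
          exact Finset.le_sup (f := fun i => (α i).length) (Finset.mem_univ i),
          fun a ha => ⟨i, Or.inr ha⟩⟩,
        hlen i,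
        Or.inr (fam_base (Or.inl ⟨i, rfl⟩)
          (List.length_pos_iff.2 (G.lang_nonempty (hα i))))⟩, rfl⟩
  have hadj : (NonUnitalStarAlgebra.adjoin ℂ
      (Set.range fun i => sWord s (α i) * p (As i) * star (sWord s (β i))) : Set B)
      ⊆ (M : Set B) :=
    fun x hx => NonUnitalStarAlgebra.adjoin_le hY hx
  have hcl : IsClosed (M : Set B) := Submodule.closed_of_finiteDimensional M
  have h2 : genCStar B (Set.range fun i => sWord s (α i) * p (As i) * star (sWord s (β i)))
      ⊆ (M : Set B) := closure_minimal hadj hcl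
  exact Submodule.finiteDimensional_of_le (Submodule.span_le.2 h2)
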